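/- For every a ∈ ℕ, the truncated family {J_{p^a,q}} is a p-family of finite type. More precisely: for every e ≥ a one has J_{p^a,p^e} = J_1^{[p^e]} + J_p^{[p^{e−1}]} + ⋯ + J_{p^a}^{[p^{e−a}]}, and consequently J_{p^a,p^e}^{[p^b]} = J_{p^a,p^{e+b}} for all e ≥ a and all b ∈ ℕ. -/

import Mathlib

/-- The `q`-th Frobenius power `I^{[q]}` of an ideal `I`: the ideal generated by
`{x^q : x ∈ I}`. -/
def frobPow {R : Type*} [CommRing R] (I : Ideal R) (q : ℕ) : Ideal R :=
  Ideal.span ((fun x => x ^ q) '' (I : Set R))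

section Aux

variable {R : Type*} [CommRing R]

lemma pow_mem_frobPow {I : Ideal R} {x : R} (hx : x ∈ I) (q : ℕ) :
    x ^ q ∈ frobPow I q :=
  Ideal.subset_span ⟨x, hx, rfl⟩

lemma frobPow_le_iff {I K : Ideal R} {q : ℕ} :
    frobPow I q ≤ K ↔ ∀ x ∈ I, x ^ q ∈ K := by
  rw [frobPow, Ideal.span_le]
  constructor
  · intro h x hx; exact h ⟨x, hx, rfl⟩
  · rintro h _ ⟨x, hx, rfl⟩; exact h x hx

lemma frobPow_mono {I K : Ideal R} (h : I ≤ K) (q : ℕ) :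
    frobPow I q ≤ frobPow K q :=
  frobPow_le_iff.2 fun x hx => pow_mem_frobPow (h hx) q

lemma frobPow_one (I : Ideal R) : frobPow I 1 = I := by
  apply le_antisymm
  · exact frobPow_le_iff.2 fun x hx => by simpa using hx
  · intro x hx; simpa using pow_mem_frobPow hx 1

variable (p : ℕ) [hp : Fact p.Prime] [CharP R p]

lemma frobPow_frobPow (I : Ideal R) (q b : ℕ) :
    frobPow (frobPow I q) (p ^ b) = frobPow I (q * p ^ b) := by
  apply le_antisymm
  · refine frobPow_le_iff.2 fun y hy => ?_
    induction hy using Submodule.span_induction with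
    | mem x hx =>
        obtain ⟨z, hz, rfl⟩ := hx
        rw [← pow_mul]
        exact pow_mem_frobPow hz _
    | zero => simpa [zero_pow (pow_ne_zero b hp.out.ne_zero)] using Ideal.zero_mem _
    | add x y _ _ hx hy => rw [add_pow_char_pow]; exact Ideal.add_mem _ hx hy
    | smul r x _ hx =>
        rw [smul_eq_mul, mul_pow]
        exact Ideal.mul_mem_left _ _ hx
  · refine frobPow_le_iff.2 fun x hx => ?_
    rw [pow_mul]
    exact pow_mem_frobPow (pow_mem_frobPow hx q) _

lemma frobPow_sum {ι : Type*} (s : Finset ι) (F : ι → Ideal R) (b : ℕ) :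
    frobPow (∑ i ∈ s, F i) (p ^ b) = ∑ i ∈ s, frobPow (F i) (p ^ b) := by
  classical
  induction s using Finset.induction with
  | empty =>
      simp only [Finset.sum_empty]
      apply le_antisymm
      · refine frobPow_le_iff.2 fun x hx => ?_
        rw [Submodule.zero_eq_bot, Ideal.mem_bot] at hx
        subst hx
        simpa [zero_pow (pow_ne_zero b hp.out.ne_zero)] using Ideal.zero_mem _
      · exact bot_le
  | insert _ _ hni ih =>
      rw [Finset.sum_insert hni, Finset.sum_insert hni, ← ih]
      apply le_antisymm
      · refine frobPow_le_iff.2 fun x hx => ?_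
        rw [Submodule.add_eq_sup, Submodule.mem_sup] at hx
        obtain ⟨y, hy, z, hz, rfl⟩ := hx
        rw [add_pow_char_pow, Submodule.add_eq_sup, Submodule.mem_sup]
        exact ⟨_, pow_mem_frobPow hy _, _, pow_mem_frobPow hz _, rfl⟩
      · rw [Submodule.add_eq_sup]
        exact sup_le (frobPow_mono le_sup_left _) (frobPow_mono le_sup_right _)

lemma sum_le_ideal {ι : Type*} (s : Finset ι) (F : ι → Ideal R) (K : Ideal R)
    (h : ∀ i ∈ s, F i ≤ K) : ∑ i ∈ s, F i ≤ K := by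
  classical
  induction s using Finset.induction with
  | empty => simp
  | insert _ _ hni ih =>
      rw [Finset.sum_insert hni, Submodule.add_eq_sup]
      exact sup_le (h _ (Finset.mem_insert_self _ _))
        (ih fun i hi => h i (Finset.mem_insert_of_mem hi))

lemma le_sum_ideal {ι : Type*} (s : Finset ι) (F : ι → Ideal R) {i : ι} (hi : i ∈ s) :
    F i ≤ ∑ j ∈ s, F j :=
  Finset.single_le_sum (fun j _ => zero_le) hi

end Aux

theorem stmt5
    (R : Type*) [CommRing R] [IsNoetherianRing R]
    (p : ℕ) (hp : p.Prime) [CharP R p]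
    -- the p-family `{J_q}`, indexed by `e` with `q = p^e`
    (J : ℕ → Ideal R) (hJfam : ∀ e, frobPow (J e) p ≤ J (e + 1))
    (a : ℕ)
    -- the `p^a`-th truncated family `T e = J_{p^a, p^e}`
    (T : ℕ → Ideal R)
    (hT₁ : ∀ e ≤ a, T e = J e)
    (hT₂ : ∀ e > a, T e = ∑ i ∈ Finset.range e, frobPow (T i) (p ^ (e - i))) :
    -- the truncated family is a p-family ...
    (∀ e, frobPow (T e) p ≤ T (e + 1)) ∧
    -- ... with the closed formula `J_{p^a,p^e} = J_1^{[p^e]} + ⋯ + J_{p^a}^{[p^{e−a}]}`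
    -- for `e ≥ a` ...
    (∀ e, a ≤ e → T e = ∑ j ∈ Finset.range (a + 1), frobPow (J j) (p ^ (e - j))) ∧
    -- ... and consequently it is of finite type:
    -- `J_{p^a,p^e}^{[p^b]} = J_{p^a,p^{e+b}}` for all `e ≥ a` and all `b`
    (∀ e, a ≤ e → ∀ b : ℕ, frobPow (T e) (p ^ b) = T (e + b)) := by
  haveI : Fact p.Prime := ⟨hp⟩
  -- iterated p-family property for J
  have hJiter : ∀ j k : ℕ, frobPow (J j) (p ^ k) ≤ J (j + k) := by
    intro j k
    induction k with
    | zero => simp [frobPow_one]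
    | succ k ih =>
        have h1 : frobPow (J j) (p ^ (k + 1)) = frobPow (frobPow (J j) (p ^ k)) (p ^ 1) := by
          rw [frobPow_frobPow, pow_add]
        rw [h1, pow_one]
        calc frobPow (frobPow (J j) (p ^ k)) p
            ≤ frobPow (J (j + k)) p := frobPow_mono ih p
          _ ≤ J (j + k + 1) := hJfam _
  -- the closed formula
  have key : ∀ e, a ≤ e → T e = ∑ j ∈ Finset.range (a + 1), frobPow (J j) (p ^ (e - j)) := by
    intro e
    induction e using Nat.strong_induction_on with
    | _ e ih =>
      intro he
      rcases eq_or_lt_of_le he with rfl | hlt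
      · -- e = a
        rw [hT₁ a le_rfl]
        apply le_antisymm
        · have h1 : J a = frobPow (J a) (p ^ (a - a)) := by
            simp [frobPow_one]
          rw [h1]
          exact le_sum_ideal _ (fun j => frobPow (J j) (p ^ (a - j)))
            (Finset.mem_range.2 (Nat.lt_succ_self a))
        · refine sum_le_ideal _ _ _ fun j hj => ?_
          rw [Finset.mem_range, Nat.lt_succ_iff] at hj
          have := hJiter j (a - j)
          rwa [Nat.add_sub_cancel' hj] at this
      · -- e > a
        rw [hT₂ e hlt]
        apply le_antisymm
        · refine sum_le_ideal _ _ _ fun i hi => ?_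
          rw [Finset.mem_range] at hi
          rcases le_or_gt i a with hia | hia
          · rw [hT₁ i hia]
            exact le_sum_ideal _ (fun j => frobPow (J j) (p ^ (e - j)))
              (Finset.mem_range.2 (Nat.lt_succ_of_le hia))
          · rw [ih i hi (le_of_lt hia), frobPow_sum]
            refine sum_le_ideal _ _ _ fun j hj => ?_
            rw [Finset.mem_range] at hj
            rw [frobPow_frobPow, ← pow_add]
            have h2 : i - j + (e - i) = e - j := by omega
            rw [h2]
            exact le_sum_ideal _ (fun j => frobPow (J j) (p ^ (e - j)))
              (Finset.mem_range.2 hj)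
        · calc ∑ j ∈ Finset.range (a + 1), frobPow (J j) (p ^ (e - j))
              = ∑ j ∈ Finset.range (a + 1), frobPow (T j) (p ^ (e - j)) :=
                Finset.sum_congr rfl fun j hj => by
                  rw [hT₁ j (Nat.lt_succ_iff.1 (Finset.mem_range.1 hj))]
            _ ≤ ∑ i ∈ Finset.range e, frobPow (T i) (p ^ (e - i)) :=
                Finset.sum_le_sum_of_subset (Finset.range_subset_range.2 hlt)
  -- finite type property
  have key3 : ∀ e, a ≤ e → ∀ b : ℕ, frobPow (T e) (p ^ b) = T (e + b) := by
    intro e he b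
    rw [key e he, key (e + b) (le_trans he (Nat.le_add_right _ _)), frobPow_sum]
    refine Finset.sum_congr rfl fun j hj => ?_
    rw [Finset.mem_range] at hj
    rw [frobPow_frobPow, ← pow_add]
    have h3 : e - j + b = e + b - j := by omega
    rw [h3]
  refine ⟨fun e => ?_, key, key3⟩
  rcases lt_or_ge e a with h | h
  · rw [hT₁ e (le_of_lt h), hT₁ (e + 1) h]
    exact hJfam e
  · have := key3 e h 1
    rw [pow_one] at this
    exact le_of_eq this
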